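/- Let k ≤ n, let (S₀,S₁,S₂) be pair-partitions of [2k], and let S̃₀, S̃₁, S̃₂ be the pair-partitions of [2n] obtained by adjoining to each of S₀, S₁, S₂ the pairs {2k+1,2k+2}, …, {2n−1,2n}. Then for every partition λ of n: N̂^{(2)}_{S̃₀,S̃₁,S̃₂}(λ) = 2^{n−k} · (n−k)! · N̂^{(2)}_{S₀,S₁,S₂}(λ). -/

import Mathlib

open scoped BigOperators

namespace ZonalPP

/-- A pair-partition of `[N]` (with `N` even), encoded as a fixed-point-free involution. -/
def IsPairPartition {N : ℕ} (s : Equiv.Perm (Fin N)) : Prop :=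
  Function.Involutive s ∧ ∀ x, s x ≠ x

noncomputable instance {G α : Type*} [Group G] [MulAction G α] [Finite α] :
    Fintype (MulAction.orbitRel.Quotient G α) :=
  Fintype.ofFinite _

/-- The loops of a couple of pair-partitions: orbits of the subgroup generated by `a, b`. -/
abbrev Loops {N : ℕ} (a b : Equiv.Perm (Fin N)) : Type :=
  MulAction.orbitRel.Quotient (Subgroup.closure ({a, b} : Set (Equiv.Perm (Fin N)))) (Fin N)

/-- The set of elements of a loop. -/
def loopSet {N : ℕ} {a b : Equiv.Perm (Fin N)} (q : Loops a b) : Set (Fin N) :=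
  MulAction.orbitRel.Quotient.orbit q

/-- Number of loops `|L(a,b)|`. -/
noncomputable def numLoops {N : ℕ} (a b : Equiv.Perm (Fin N)) : ℕ :=
  Nat.card (Loops a b)

/-- The type of a couple of pair-partitions: the multiset of halved loop sizes. -/
noncomputable def loopType {N : ℕ} (a b : Equiv.Perm (Fin N)) : Multiset ℕ :=
  (Finset.univ : Finset (Loops a b)).val.map fun q => Nat.card (loopSet q) / 2

/-- The multiset of cycle lengths (including fixed points) of a permutation. -/
noncomputable def cycleSizes {N : ℕ} (σ : Equiv.Perm (Fin N)) : Multiset ℕ :=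
  (Finset.univ : Finset (MulAction.orbitRel.Quotient
      (Subgroup.closure ({σ} : Set (Equiv.Perm (Fin N)))) (Fin N))).val.map
    fun q => Nat.card (MulAction.orbitRel.Quotient.orbit q)

/-- `z_μ = μ₁μ₂⋯ ∏ᵢ mᵢ(μ)!`. -/
def zMu {n : ℕ} (μ : n.Partition) : ℕ :=
  μ.parts.prod * ∏ i ∈ μ.parts.toFinset, (μ.parts.count i).factorial

/-- The first pair-partition `S`, pairing `2i` with `2i+1` (0-indexed). -/
def firstPP (n : ℕ) : Equiv.Perm (Fin (2 * n)) where
  toFun x := ⟨2 * ((x : ℕ) / 2) + (1 - (x : ℕ) % 2), by have := x.isLt; omega⟩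
  invFun x := ⟨2 * ((x : ℕ) / 2) + (1 - (x : ℕ) % 2), by have := x.isLt; omega⟩
  left_inv x := by
    apply Fin.ext
    have := x.isLt
    simp only [Fin.val_mk]
    omega
  right_inv x := by
    apply Fin.ext
    have := x.isLt
    simp only [Fin.val_mk]
    omega

/-- Row lengths of a partition (weakly decreasing), 0-indexed; `rowLen lam r = λ_{r+1}`. -/
def rowLen {n : ℕ} (lam : n.Partition) (r : ℕ) : ℕ :=
  ((lam.parts.sort (· ≤ ·)).reverse).getD r 0

/-- `f` maps into the boxes of `2λ`; a box is a pair `(row, column)`, both 0-indexed. -/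
def InBoxes2 {M n : ℕ} (lam : n.Partition) (f : Fin M → ℕ × ℕ) : Prop :=
  ∀ l, (f l).2 < 2 * rowLen lam (f l).1

/-- Condition (P0): `f l` and `f (S₀ l)` are neighbors in `2λ`. -/
def P0cond {M : ℕ} (S0 : Equiv.Perm (Fin M)) (f : Fin M → ℕ × ℕ) : Prop :=
  ∀ l, (f (S0 l)).1 = (f l).1 ∧ (f (S0 l)).2 / 2 = (f l).2 / 2 ∧ (f (S0 l)).2 ≠ (f l).2

/-- Condition (P1): `f l` and `f (S₀ (S₁ l))` are in the same column. -/
def P1cond {M : ℕ} (S0 S1 : Equiv.Perm (Fin M)) (f : Fin M → ℕ × ℕ) : Prop :=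
  ∀ l, (f (S0 (S1 l))).2 = (f l).2

/-- Condition (P2): `f l` and `f (S₂ l)` are in the same row. -/
def P2cond {M : ℕ} (S2 : Equiv.Perm (Fin M)) (f : Fin M → ℕ × ℕ) : Prop :=
  ∀ l, (f (S2 l)).1 = (f l).1

/-- `N²_{S₀,S₁,S₂}(λ)`: the number of functions from `[2k]` to the boxes of `2λ`
satisfying (P0), (P1), (P2). -/
noncomputable def N2 {k n : ℕ} (S0 S1 S2 : Equiv.Perm (Fin (2*k))) (lam : n.Partition) : ℕ :=
  Nat.card {f : Fin (2*k) → ℕ × ℕ //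
    InBoxes2 lam f ∧ P0cond S0 f ∧ P1cond S0 S1 f ∧ P2cond S2 f}

/-- `N̂²_{S₀,S₁,S₂}(λ)`: the number of injective such functions. -/
noncomputable def Nhat2 {k n : ℕ} (S0 S1 S2 : Equiv.Perm (Fin (2*k))) (lam : n.Partition) : ℕ :=
  Nat.card {f : Fin (2*k) → ℕ × ℕ //
    Function.Injective f ∧ InBoxes2 lam f ∧ P0cond S0 f ∧ P1cond S0 S1 f ∧ P2cond S2 f}

/-- `N¹_{S₀,S₁,S₂}(λ)`: the number of functions from `[2k]` to the boxes of `λ` such that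
`f∘S₀ = f`, `f(S₁ l)` is in the same column as `f l`, and `f(S₂ l)` is in the same row. -/
noncomputable def N1 {k n : ℕ} (S0 S1 S2 : Equiv.Perm (Fin (2*k))) (lam : n.Partition) : ℕ :=
  Nat.card {f : Fin (2*k) → ℕ × ℕ //
    (∀ l, (f l).2 < rowLen lam (f l).1) ∧ (∀ l, f (S0 l) = f l) ∧
    (∀ l, (f (S1 l)).2 = (f l).2) ∧ (∀ l, (f (S2 l)).1 = (f l).1)}

/-- `T` is the pair-partition `S̃` of `[2n]` obtained from the pair-partition `S` of `[2k]`
by adjoining the pairs `{2k+1, 2k+2}, …, {2n-1, 2n}` (1-indexed). -/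
def ExtendsPP {k n : ℕ} (S : Equiv.Perm (Fin (2*k))) (T : Equiv.Perm (Fin (2*n))) : Prop :=
  (∀ (x : Fin (2*k)) (y : Fin (2*n)), (x : ℕ) = (y : ℕ) → ((T y : ℕ) = (S x : ℕ))) ∧
  (∀ y : Fin (2*n), 2*k ≤ (y : ℕ) → ((T y : ℕ) = 2 * ((y : ℕ)/2) + (1 - (y : ℕ) % 2)))

end ZonalPP

/-!
Restricting to `[2k]` maps the functions counted on the left onto those counted by
`N̂²_{S₀,S₁,S₂}(λ)`. On an adjoined pair `{y, y'}` conditions (P1) and (P2) say nothing new,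
since `S̃₀ S̃₁` fixes `y` and `S̃₂ y = S̃₀ y`; so extending an injective `g` amounts to placing
each of the `n - k` adjoined pairs, by (P0), on its own domino `{(r, 2c), (r, 2c + 1)}` of `2λ`
not met by `g`, in one of two orientations. By (P0) and injectivity `g` meets exactly `k` of the
`n` dominoes, which leaves `(n - k)!` placements and `2^(n-k)` orientations over every `g`.
-/

open Finset Function

lemma Nat.card_eq_card_mul_of_fiber_equiv {α β γ : Type*} (f : α → β)
    (e : ∀ b, {a // f a = b} ≃ γ) : Nat.card α = Nat.card β * Nat.card γ := by
  rw [← Nat.card_prod]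
  exact Nat.card_congr <| (Equiv.sigmaFiberEquiv f).symm.trans <|
    (Equiv.sigmaCongrRight e).trans (Equiv.sigmaEquivProd β γ)

lemma List.sum_range_getD (l : List ℕ) {m : ℕ} (hm : l.length ≤ m) :
    ∑ r ∈ Finset.range m, l.getD r 0 = l.sum := by
  induction l generalizing m with
  | nil => simp
  | cons a t ih =>
    obtain ⟨m, rfl⟩ := Nat.exists_eq_add_one_of_ne_zero (by simp at hm; omega : m ≠ 0)
    rw [Finset.sum_range_succ', List.getD_cons_zero, List.sum_cons, add_comm]
    simpa using ih (by simpa using hm)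

lemma Nat.Partition.card_parts_le {n : ℕ} (lam : n.Partition) : Multiset.card lam.parts ≤ n := by
  simpa [lam.parts_sum] using Multiset.card_nsmul_le_sum (fun _ hx => lam.parts_pos hx)

namespace ZonalPP

section RowLengths

variable {n : ℕ} (lam : n.Partition)

lemma rowLen_le (r : ℕ) : rowLen lam r ≤ n := by
  unfold rowLen
  rcases lt_or_ge r (lam.parts.sort (· ≤ ·)).reverse.length with h | h
  · rw [List.getD_eq_getElem _ _ h]
    have hmem := List.getElem_mem h
    rw [List.mem_reverse, Multiset.mem_sort] at hmem
    exact Nat.Partition.le_of_mem_parts hmem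
  · rw [List.getD_eq_default _ _ h]
    exact Nat.zero_le _

lemma lt_of_rowLen_pos {r : ℕ} (h : 0 < rowLen lam r) : r < n := by
  by_contra! hr
  have hlen : (lam.parts.sort (· ≤ ·)).reverse.length ≤ r := by
    rw [List.length_reverse, Multiset.length_sort]
    exact lam.card_parts_le.trans hr
  rw [rowLen, List.getD_eq_default _ _ hlen] at h
  exact h.false

lemma sum_range_rowLen : ∑ r ∈ range n, rowLen lam r = n := by
  unfold rowLen
  rw [List.sum_range_getD _ (by simpa using lam.card_parts_le), List.sum_reverse,
    ← Multiset.sum_coe, Multiset.sort_eq, lam.parts_sum]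

end RowLengths

/-- The boxes `(r, 2c)` and `(r, 2c + 1)` of `2λ` form the domino `(r, c)`; the dominoes of `2λ`
are thus the boxes of `λ`. -/
def domino (p : ℕ × ℕ) : ℕ × ℕ := (p.1, p.2 / 2)

def dominoes {n : ℕ} (lam : n.Partition) : Finset (ℕ × ℕ) :=
  {d ∈ range n ×ˢ range n | d.2 < rowLen lam d.1}

section Dominoes

variable {n : ℕ} {lam : n.Partition}

lemma mem_dominoes {d : ℕ × ℕ} : d ∈ dominoes lam ↔ d.2 < rowLen lam d.1 := by
  simp only [dominoes, mem_filter, mem_product, mem_range, and_iff_right_iff_imp]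
  intro h
  exact ⟨lt_of_rowLen_pos lam (by omega), h.trans_le (rowLen_le lam _)⟩

lemma domino_mem_dominoes {p : ℕ × ℕ} (h : p.2 < 2 * rowLen lam p.1) :
    domino p ∈ dominoes lam :=
  mem_dominoes.2 (by simp only [domino]; omega)

variable (lam) in
lemma card_dominoes : #(dominoes lam) = n := by
  have : dominoes lam = (range n).biUnion fun r => {r} ×ˢ range (rowLen lam r) := by
    ext d
    simp only [mem_dominoes, mem_biUnion, mem_product, mem_singleton, mem_range]
    refine ⟨fun h => ⟨d.1, lt_of_rowLen_pos lam (by omega), rfl, h⟩, ?_⟩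
    rintro ⟨_, _, rfl, h⟩
    exact h
  rw [this, card_biUnion (fun r _ r' _ hr => by simp [disjoint_left, hr.symm])]
  simpa using sum_range_rowLen lam

end Dominoes

section DominoesOfP0

variable {M : ℕ} {S : Equiv.Perm (Fin M)} {f : Fin M → ℕ × ℕ}

lemma domino_apply_eq (hP0 : P0cond S f) (l : Fin M) : domino (f (S l)) = domino (f l) :=
  Prod.ext (hP0 l).1 (hP0 l).2.1

lemma eq_or_eq_of_domino_eq (hf : Injective f) (hP0 : P0cond S f) {a l : Fin M}
    (h : domino (f a) = domino (f l)) : a = l ∨ a = S l := by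
  obtain ⟨h1, h2, h3⟩ := hP0 l
  simp only [domino, Prod.mk.injEq] at h
  rcases (by omega : (f a).2 = (f l).2 ∨ (f a).2 = (f (S l)).2) with hc | hc
  · exact .inl (hf (Prod.ext h.1 hc))
  · exact .inr (hf (Prod.ext (h.1.trans h1.symm) hc))

lemma two_mul_card_image_domino (hf : Injective f) (hP0 : P0cond S f) :
    2 * #(univ.image (domino ∘ f)) = M := by
  have hfiber : ∀ d ∈ univ.image (domino ∘ f), #{l | (domino ∘ f) l = d} = 2 := by
    intro d hd
    obtain ⟨l, -, rfl⟩ := mem_image.1 hd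
    have hSl : S l ≠ l := fun h => (hP0 l).2.2 (by rw [h])
    rw [← card_pair hSl.symm]
    congr 1
    ext a
    simp only [comp_apply, mem_filter, mem_univ, true_and, mem_insert, mem_singleton]
    refine ⟨eq_or_eq_of_domino_eq hf hP0, ?_⟩
    rintro (rfl | rfl)
    exacts [rfl, domino_apply_eq hP0 l]
  have hM := card_eq_sum_card_image (domino ∘ f) (univ : Finset (Fin M))
  rw [sum_congr rfl hfiber, sum_const, smul_eq_mul, card_univ, Fintype.card_fin] at hM
  omega

end DominoesOfP0

def freeDominoes {M n : ℕ} (lam : n.Partition) (g : Fin M → ℕ × ℕ) : Finset (ℕ × ℕ) :=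
  dominoes lam \ univ.image (domino ∘ g)

lemma card_freeDominoes {k n : ℕ} {lam : n.Partition} {S : Equiv.Perm (Fin (2 * k))}
    {g : Fin (2 * k) → ℕ × ℕ} (hg : Injective g) (hbox : InBoxes2 lam g) (hP0 : P0cond S g) :
    #(freeDominoes lam g) = n - k := by
  have hsub : univ.image (domino ∘ g) ⊆ dominoes lam := by
    simpa [subset_iff] using fun l => domino_mem_dominoes (hbox l)
  have := two_mul_card_image_domino hg hP0
  rw [freeDominoes, card_sdiff_of_subset hsub, card_dominoes]
  omega

def IsAdmissible {M n : ℕ} (lam : n.Partition) (S0 S1 S2 : Equiv.Perm (Fin M))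
    (f : Fin M → ℕ × ℕ) : Prop :=
  Injective f ∧ InBoxes2 lam f ∧ P0cond S0 f ∧ P1cond S0 S1 f ∧ P2cond S2 f

lemma nhat2_eq_card {k n : ℕ} (S0 S1 S2 : Equiv.Perm (Fin (2 * k))) (lam : n.Partition) :
    Nhat2 S0 S1 S2 lam = Nat.card {f // IsAdmissible lam S0 S1 S2 f} :=
  rfl

section AdjoinedPairs

variable {k n : ℕ}

/-- With `0`-indexed points, the adjoined pairs are `{2k + 2j, 2k + 2j + 1}` for `j < n - k`. -/
def pairIndex (y : Fin (2 * n)) (hy : 2 * k ≤ (y : ℕ)) : Fin (n - k) :=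
  ⟨((y : ℕ) - 2 * k) / 2, by omega⟩

def pairStart (j : Fin (n - k)) : Fin (2 * n) :=
  ⟨2 * k + 2 * j, by omega⟩

lemma le_pairStart (j : Fin (n - k)) : 2 * k ≤ (pairStart j : ℕ) :=
  Nat.le_add_right _ _

lemma pairIndex_pairStart (j : Fin (n - k)) : pairIndex (pairStart j) (le_pairStart j) = j :=
  Fin.ext (by simp [pairIndex, pairStart])

lemma exists_castLE_eq_or_le (h : 2 * k ≤ 2 * n) (y : Fin (2 * n)) :
    (∃ x : Fin (2 * k), Fin.castLE h x = y) ∨ 2 * k ≤ (y : ℕ) := by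
  by_cases hy : (y : ℕ) < 2 * k
  · exact .inl ⟨⟨y, hy⟩, rfl⟩
  · exact .inr (by omega)

variable {S : Equiv.Perm (Fin (2 * k))} {T : Equiv.Perm (Fin (2 * n))}

lemma ExtendsPP.apply_castLE (hT : ExtendsPP S T) (h : 2 * k ≤ 2 * n) (x : Fin (2 * k)) :
    T (Fin.castLE h x) = Fin.castLE h (S x) :=
  Fin.ext (hT.1 x _ rfl)

lemma ExtendsPP.le_apply (hT : ExtendsPP S T) {y : Fin (2 * n)} (hy : 2 * k ≤ (y : ℕ)) :
    2 * k ≤ (T y : ℕ) := by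
  have := hT.2 y hy
  omega

lemma ExtendsPP.pairIndex_apply (hT : ExtendsPP S T) {y : Fin (2 * n)} (hy : 2 * k ≤ (y : ℕ)) :
    pairIndex (T y) (hT.le_apply hy) = pairIndex y hy := by
  have := hT.2 y hy
  exact Fin.ext (by simp only [pairIndex]; omega)

lemma ExtendsPP.eq_pairStart_or_eq_apply (hT : ExtendsPP S T) {y : Fin (2 * n)}
    (hy : 2 * k ≤ (y : ℕ)) :
    y = pairStart (pairIndex y hy) ∨ y = T (pairStart (pairIndex y hy)) := by
  have := hT.2 (pairStart (pairIndex y hy)) (le_pairStart _)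
  simp only [pairStart, pairIndex] at this ⊢
  rcases Nat.mod_two_eq_zero_or_one (y : ℕ) with hpar | hpar
  · exact .inl (Fin.ext (by simp only; omega))
  · exact .inr (Fin.ext (by omega))

end AdjoinedPairs

section Extension

variable {k n : ℕ}

/-- Extends `g` by placing the `j`-th adjoined pair on the domino `D j`, its first point in the
column of parity `b j`. -/
def extendFn (g : Fin (2 * k) → ℕ × ℕ) (D : Fin (n - k) → ℕ × ℕ) (b : Fin (n - k) → Fin 2) :
    Fin (2 * n) → ℕ × ℕ :=
  fun y => if hy : 2 * k ≤ (y : ℕ) then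
      ((D (pairIndex y hy)).1, 2 * (D (pairIndex y hy)).2 + ((y : ℕ) + b (pairIndex y hy)) % 2)
    else g ⟨y, by omega⟩

section Values

variable (g : Fin (2 * k) → ℕ × ℕ) (D : Fin (n - k) → ℕ × ℕ) (b : Fin (n - k) → Fin 2)

lemma extendFn_castLE (h : 2 * k ≤ 2 * n) (x : Fin (2 * k)) :
    extendFn g D b (Fin.castLE h x) = g x := by
  simp [extendFn, x.isLt]

lemma extendFn_of_le {y : Fin (2 * n)} (hy : 2 * k ≤ (y : ℕ)) :
    extendFn g D b y =
      ((D (pairIndex y hy)).1, 2 * (D (pairIndex y hy)).2 + ((y : ℕ) + b (pairIndex y hy)) % 2) :=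
  dif_pos hy

lemma domino_extendFn_of_le {y : Fin (2 * n)} (hy : 2 * k ≤ (y : ℕ)) :
    domino (extendFn g D b y) = D (pairIndex y hy) := by
  rw [extendFn_of_le g D b hy]
  exact Prod.ext rfl (by simp only [domino]; omega)

lemma injective_extendFn (h : 2 * k ≤ 2 * n) (hg : Injective g)
    (hfree : ∀ j, D j ∉ univ.image (domino ∘ g)) (hD : Injective D) :
    Injective (extendFn g D b) := by
  have low_ne_high : ∀ x (y : Fin (2 * n)) (hy : 2 * k ≤ (y : ℕ)), g x ≠ extendFn g D b y := by
    intro x y hy hxy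
    refine hfree (pairIndex y hy) (mem_image.2 ⟨x, mem_univ _, ?_⟩)
    rw [comp_apply, hxy, domino_extendFn_of_le g D b hy]
  intro y y' hyy
  rcases exists_castLE_eq_or_le h y with ⟨x, rfl⟩ | hy <;>
    rcases exists_castLE_eq_or_le h y' with ⟨x', rfl⟩ | hy'
  · rw [extendFn_castLE, extendFn_castLE] at hyy
    rw [hg hyy]
  · exact absurd (by rwa [extendFn_castLE] at hyy) (low_ne_high x y' hy')
  · exact absurd (by rwa [extendFn_castLE] at hyy) (low_ne_high x' y hy).symm
  · have hj : pairIndex y hy = pairIndex y' hy' :=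
      hD (by rw [← domino_extendFn_of_le g D b hy, hyy, domino_extendFn_of_le g D b hy'])
    rw [extendFn_of_le g D b hy, extendFn_of_le g D b hy', hj, Prod.mk.injEq] at hyy
    have hj' := congrArg Fin.val hj
    simp only [pairIndex] at hj'
    exact Fin.ext (by omega)

end Values

variable {S0 S1 S2 : Equiv.Perm (Fin (2 * k))} {T0 T1 T2 : Equiv.Perm (Fin (2 * n))}
  {lam : n.Partition}

lemma ExtendsPP.p1cond_iff (h : 2 * k ≤ 2 * n) (hT0 : ExtendsPP S0 T0) (hT1 : ExtendsPP S1 T1)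
    (f : Fin (2 * n) → ℕ × ℕ) : P1cond T0 T1 f ↔ P1cond S0 S1 (f ∘ Fin.castLE h) := by
  refine ⟨fun hf x => ?_, fun hf y => ?_⟩
  · simpa [hT0.apply_castLE, hT1.apply_castLE] using hf (Fin.castLE h x)
  rcases exists_castLE_eq_or_le h y with ⟨x, rfl⟩ | hy
  · simpa [hT0.apply_castLE, hT1.apply_castLE] using hf x
  · have h1 := hT1.2 y hy
    have h0 := hT0.2 (T1 y) (hT1.le_apply hy)
    rw [show T0 (T1 y) = y from Fin.ext (by omega)]

lemma ExtendsPP.p2cond_of_p0cond (h : 2 * k ≤ 2 * n) (hT0 : ExtendsPP S0 T0)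
    (hT2 : ExtendsPP S2 T2) {f : Fin (2 * n) → ℕ × ℕ} (hf0 : P0cond T0 f)
    (hf2 : P2cond S2 (f ∘ Fin.castLE h)) : P2cond T2 f := by
  intro y
  rcases exists_castLE_eq_or_le h y with ⟨x, rfl⟩ | hy
  · simpa [hT2.apply_castLE] using hf2 x
  · have h2 := hT2.2 y hy
    have h0 := hT0.2 y hy
    rw [show T2 y = T0 y from Fin.ext (by omega)]
    exact (hf0 y).1

lemma IsAdmissible.comp_castLE (h : 2 * k ≤ 2 * n) (hT0 : ExtendsPP S0 T0)
    (hT1 : ExtendsPP S1 T1) (hT2 : ExtendsPP S2 T2) {f : Fin (2 * n) → ℕ × ℕ}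
    (hf : IsAdmissible lam T0 T1 T2 f) : IsAdmissible lam S0 S1 S2 (f ∘ Fin.castLE h) := by
  obtain ⟨hinj, hbox, hf0, hf1, hf2⟩ := hf
  refine ⟨hinj.comp (Fin.castLE_injective h), fun x => hbox _, fun x => ?_,
    (hT0.p1cond_iff h hT1 f).1 hf1, fun x => ?_⟩
  · simpa [hT0.apply_castLE] using hf0 (Fin.castLE h x)
  · simpa [hT2.apply_castLE] using hf2 (Fin.castLE h x)

variable {g : Fin (2 * k) → ℕ × ℕ} {D : Fin (n - k) → ℕ × ℕ} (b : Fin (n - k) → Fin 2)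

lemma p0cond_extendFn (h : 2 * k ≤ 2 * n) (hT0 : ExtendsPP S0 T0) (hg : P0cond S0 g) :
    P0cond T0 (extendFn g D b) := by
  intro y
  rcases exists_castLE_eq_or_le h y with ⟨x, rfl⟩ | hy
  · simpa [hT0.apply_castLE, extendFn_castLE] using hg x
  · have := hT0.2 y hy
    rw [extendFn_of_le g D b (hT0.le_apply hy), extendFn_of_le g D b hy, hT0.pairIndex_apply hy]
    refine ⟨rfl, ?_, ?_⟩ <;> simp only <;> omega

lemma isAdmissible_extendFn (h : 2 * k ≤ 2 * n) (hT0 : ExtendsPP S0 T0) (hT1 : ExtendsPP S1 T1)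
    (hT2 : ExtendsPP S2 T2) (hg : IsAdmissible lam S0 S1 S2 g)
    (hD : ∀ j, D j ∈ freeDominoes lam g) (hDinj : Injective D) :
    IsAdmissible lam T0 T1 T2 (extendFn g D b) := by
  obtain ⟨hinj, hbox, hg0, hg1, hg2⟩ := hg
  have hrestrict : extendFn g D b ∘ Fin.castLE h = g := funext (extendFn_castLE g D b h)
  have hP0 : P0cond T0 (extendFn g D b) := p0cond_extendFn b h hT0 hg0
  refine ⟨injective_extendFn g D b h hinj (fun j => (mem_sdiff.1 (hD j)).2) hDinj,
    fun y => ?_, hP0, (hT0.p1cond_iff h hT1 _).2 (by rwa [hrestrict]),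
    hT0.p2cond_of_p0cond h hT2 hP0 (by rwa [hrestrict])⟩
  rcases exists_castLE_eq_or_le h y with ⟨x, rfl⟩ | hy
  · simpa [extendFn_castLE] using hbox x
  · have := mem_dominoes.1 (mem_sdiff.1 (hD (pairIndex y hy))).1
    rw [extendFn_of_le g D b hy]
    simp only
    omega

end Extension

section Fiber

variable {k n : ℕ} {S0 S1 S2 : Equiv.Perm (Fin (2 * k))} {T0 T1 T2 : Equiv.Perm (Fin (2 * n))}
  {lam : n.Partition} {f : Fin (2 * n) → ℕ × ℕ}

lemma ExtendsPP.domino_pairStart_mem_freeDominoes (h : 2 * k ≤ 2 * n) (hT0 : ExtendsPP S0 T0)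
    (hf : IsAdmissible lam T0 T1 T2 f) (j : Fin (n - k)) :
    domino (f (pairStart j)) ∈ freeDominoes lam (f ∘ Fin.castLE h) := by
  obtain ⟨hinj, hbox, hf0, -⟩ := hf
  refine mem_sdiff.2 ⟨domino_mem_dominoes (hbox _), fun hused => ?_⟩
  obtain ⟨x, -, hx⟩ := mem_image.1 hused
  have hlow : ∀ x : Fin (2 * k), pairStart j ≠ Fin.castLE h x := fun x hx => by
    have := congrArg Fin.val hx
    simp only [pairStart, Fin.val_castLE] at this
    omega
  rcases eq_or_eq_of_domino_eq hinj hf0 hx.symm with hj | hj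
  · exact hlow x hj
  · exact hlow (S0 x) (hj.trans (hT0.apply_castLE h x))

lemma ExtendsPP.injective_domino_pairStart (hT0 : ExtendsPP S0 T0) (hinj : Injective f)
    (hf0 : P0cond T0 f) : Injective fun j : Fin (n - k) => domino (f (pairStart j)) := by
  intro j j' hjj
  have hT := hT0.2 (pairStart j') (le_pairStart j')
  rcases eq_or_eq_of_domino_eq hinj hf0 hjj with hjj' | hjj' <;>
    have := congrArg Fin.val hjj' <;> simp only [pairStart] at this hT
  · exact Fin.ext (by omega)
  · omega

lemma ExtendsPP.extendFn_eq_self (h : 2 * k ≤ 2 * n) (hT0 : ExtendsPP S0 T0) (hf0 : P0cond T0 f) :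
    extendFn (f ∘ Fin.castLE h) (fun j => domino (f (pairStart j)))
      (fun j => ⟨(f (pairStart j)).2 % 2, Nat.mod_lt _ two_pos⟩) = f := by
  funext y
  rcases exists_castLE_eq_or_le h y with ⟨x, rfl⟩ | hy
  · exact extendFn_castLE _ _ _ h x
  rw [extendFn_of_le _ _ _ hy]
  rcases hT0.eq_pairStart_or_eq_apply hy with hyz | hyz
  · conv_rhs => rw [hyz]
    have := congrArg Fin.val hyz
    simp only [pairStart, pairIndex] at this
    exact Prod.ext rfl (by simp only [domino]; omega)
  · conv_rhs => rw [hyz]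
    obtain ⟨h1, h2, h3⟩ := hf0 (pairStart (pairIndex y hy))
    have hyz' := congrArg Fin.val hyz
    have hT := hT0.2 _ (le_pairStart (pairIndex y hy))
    simp only [pairStart, pairIndex] at hyz' hT
    exact Prod.ext h1.symm (by simp only [domino]; omega)

variable (h : 2 * k ≤ 2 * n) (hT0 : ExtendsPP S0 T0) (hT1 : ExtendsPP S1 T1)
  (hT2 : ExtendsPP S2 T2)

def restrictAdmissible :
    {f // IsAdmissible lam T0 T1 T2 f} → {g // IsAdmissible lam S0 S1 S2 g} :=
  fun f => ⟨f.1 ∘ Fin.castLE h, f.2.comp_castLE h hT0 hT1 hT2⟩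

def fiberEquiv (g : {g // IsAdmissible lam S0 S1 S2 g}) :
    {f // restrictAdmissible h hT0 hT1 hT2 f = g} ≃
      (Fin (n - k) ↪ freeDominoes lam g.1) × (Fin (n - k) → Fin 2) where
  toFun F :=
    (⟨fun j => ⟨domino (F.1.1 (pairStart j)),
        congrArg Subtype.val F.2 ▸ hT0.domino_pairStart_mem_freeDominoes h F.1.2 j⟩,
      fun _ _ hjj =>
        hT0.injective_domino_pairStart F.1.2.1 F.1.2.2.2.1 (congrArg Subtype.val hjj)⟩,
     fun j => ⟨(F.1.1 (pairStart j)).2 % 2, Nat.mod_lt _ two_pos⟩)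
  invFun Eb :=
    ⟨⟨extendFn g.1 (fun j => Eb.1 j) Eb.2,
      isAdmissible_extendFn Eb.2 h hT0 hT1 hT2 g.2 (fun j => (Eb.1 j).2)
        (fun j j' hjj => Eb.1.injective (Subtype.ext hjj))⟩,
     Subtype.ext (funext (extendFn_castLE g.1 (fun j => Eb.1 j) Eb.2 h))⟩
  left_inv := by
    rintro ⟨⟨f, hf⟩, rfl⟩
    exact Subtype.ext (Subtype.ext (hT0.extendFn_eq_self h hf.2.2.1))
  right_inv := by
    rintro ⟨E, b⟩
    refine Prod.ext (Embedding.ext fun j => Subtype.ext ?_) (funext fun j => Fin.ext ?_)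
    · change domino (extendFn g.1 (fun j => E j) b (pairStart j)) = E j
      rw [domino_extendFn_of_le _ _ _ (le_pairStart j), pairIndex_pairStart]
    · change (extendFn g.1 (fun j => E j) b (pairStart j)).2 % 2 = b j
      rw [extendFn_of_le _ _ _ (le_pairStart j), pairIndex_pairStart]
      simp only [pairStart]
      omega

end Fiber

theorem statement10_general {k n : ℕ} (hkn : k ≤ n)
    (S0 S1 S2 : Equiv.Perm (Fin (2*k)))
    (T0 T1 T2 : Equiv.Perm (Fin (2*n)))
    (hT0 : ExtendsPP S0 T0) (hT1 : ExtendsPP S1 T1) (hT2 : ExtendsPP S2 T2)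
    (lam : Nat.Partition n) :
    Nhat2 T0 T1 T2 lam = 2 ^ (n - k) * (n - k).factorial * Nhat2 S0 S1 S2 lam := by
  have h : 2 * k ≤ 2 * n := by omega
  have hfree (g : {g // IsAdmissible lam S0 S1 S2 g}) : freeDominoes lam g.1 ≃ Fin (n - k) :=
    (freeDominoes lam g.1).equivFinOfCardEq (card_freeDominoes g.2.1 g.2.2.1 g.2.2.2.1)
  rw [nhat2_eq_card, nhat2_eq_card, Nat.card_eq_card_mul_of_fiber_equiv
    (restrictAdmissible h hT0 hT1 hT2) fun g => (fiberEquiv h hT0 hT1 hT2 g).trans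
      ((Equiv.embeddingCongr (Equiv.refl _) (hfree g)).prodCongr (Equiv.refl _))]
  simp only [Nat.card_eq_fintype_card, Fintype.card_prod, Fintype.card_embedding_eq,
    Fintype.card_fin, Nat.descFactorial_self, Fintype.card_fun]
  ring

/-- If `S̃₀, S̃₁, S̃₂` are the extensions of the pair-partitions
`S₀, S₁, S₂` of `[2k]` to `[2n]` by the pairs `{2k+1,2k+2}, …, {2n-1,2n}`, then
`N̂²_{S̃₀,S̃₁,S̃₂}(λ) = 2^{n-k} (n-k)! N̂²_{S₀,S₁,S₂}(λ)`. -/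
theorem statement10 {k n : ℕ} (hkn : k ≤ n)
    (S0 S1 S2 : Equiv.Perm (Fin (2*k)))
    (h0 : IsPairPartition S0) (h1 : IsPairPartition S1) (h2 : IsPairPartition S2)
    (T0 T1 T2 : Equiv.Perm (Fin (2*n)))
    (hT0 : ExtendsPP S0 T0) (hT1 : ExtendsPP S1 T1) (hT2 : ExtendsPP S2 T2)
    (lam : Nat.Partition n) :
    Nhat2 T0 T1 T2 lam = 2 ^ (n - k) * (n - k).factorial * Nhat2 S0 S1 S2 lam :=
  statement10_general hkn S0 S1 S2 T0 T1 T2 hT0 hT1 hT2 lam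

end ZonalPP
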